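/- Let a, b > 0, let v ∈ P₂ ⊕ span{y³}, and let g(x,y) = α + βx + γy be an affine polynomial. Set m_b = (1/a)·∫₀ᵃ v(x,0) dx and m_t = (1/a)·∫₀ᵃ v(x,b) dx. Then ∫₀ᵃ g(x,b)·(v(x,b) − m_t) dx − ∫₀ᵃ g(x,0)·(v(x,0) − m_b) dx = (a²β/12)·∫₀ᵃ∫₀ᵇ (∂²v/∂x∂y)(x,y) dy dx. (This is the identity J₁,K(u₁,v) = J′₁,K(u₁,v) for all u₁ with ∂u₁/∂y = g ∈ P₁.) -/

import Mathlib

/-! Subtracting the edge mean annihilates the constant part of `g` on each horizontal edge, so the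
left side equals `β ∫₀ᵃ (x - a/2) (v(x,b) - v(x,0)) dx`. This and the integral of `∂²v/∂x∂y` are
additive in `v`, so it suffices to compare them on the monomials `xⁱyʲ` of `v`: both vanish when
`i = 0` or `j = 0`, and the only remaining monomial allowed by the degree bound is `xy`, for which
both sides are `a³b/12` up to the factor `β`. -/

open MvPolynomial

/-- Membership in `P₂ ⊕ span{y³}`, the space of first components of the
vector-valued shape function space `V_K` of the Stokes element. -/
def memP2y3 (v : MvPolynomial (Fin 2) ℝ) : Prop :=
  ∃ (p : MvPolynomial (Fin 2) ℝ) (c : ℝ),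
    p.totalDegree ≤ 2 ∧ v = p + C c * X 1 ^ 3

open intervalIntegral

theorem integral_affine_mul_sub_average (c d α β : ℝ) {f : ℝ → ℝ}
    (hf : IntervalIntegrable f MeasureTheory.volume c d) :
    ∫ x in c..d, (α + β * x) * (f x - (d - c)⁻¹ * ∫ t in c..d, f t) =
      β * ∫ x in c..d, (x - (c + d) / 2) * f x := by
  rcases eq_or_ne c d with rfl | hcd
  · simp
  have hxf : IntervalIntegrable (fun x => x * f x) MeasureTheory.volume c d :=
    hf.continuousOn_mul continuousOn_id
  have hgf : ∫ x in c..d, (α + β * x) * f x =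
      α * (∫ x in c..d, f x) + β * ∫ x in c..d, x * f x := by
    simp only [add_mul, mul_assoc]
    rw [integral_add (hf.const_mul α) (hxf.const_mul β), integral_const_mul,
      integral_const_mul]
  have hxf' : ∫ x in c..d, (x - (c + d) / 2) * f x =
      (∫ x in c..d, x * f x) - (c + d) / 2 * ∫ x in c..d, f x := by
    simp only [sub_mul]
    rw [integral_sub hxf (hf.const_mul _), integral_const_mul]
  have hg : ∫ x in c..d, (α + β * x) = α * (d - c) + β * (d ^ 2 - c ^ 2) / 2 := by
    rw [integral_add intervalIntegrable_const (intervalIntegrable_id.const_mul β),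
      integral_const_mul, integral_id, integral_const, smul_eq_mul]
    ring
  simp only [mul_sub]
  rw [integral_sub (hf.continuousOn_mul (by fun_prop))
      ((Continuous.intervalIntegrable (by fun_prop) c d).mul_const _),
    integral_mul_const, hgf, hxf', hg]
  field_simp [sub_ne_zero.2 hcd.symm]
  ring

namespace MvPolynomial

theorem continuous_eval_vecCons_two (v : MvPolynomial (Fin 2) ℝ) :
    Continuous fun p : ℝ × ℝ => eval ![p.1, p.2] v :=
  (continuous_eval v).comp (by fun_prop)

theorem intervalIntegrable_eval_vecCons_two (v : MvPolynomial (Fin 2) ℝ) (y c d : ℝ) :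
    IntervalIntegrable (fun x => eval ![x, y] v) MeasureTheory.volume c d :=
  ((continuous_eval_vecCons_two v).comp
    (continuous_id.prodMk continuous_const)).intervalIntegrable c d

theorem eval_vecCons_two_monomial (d : Fin 2 →₀ ℕ) (r x y : ℝ) :
    eval ![x, y] (monomial d r) = r * x ^ d 0 * y ^ d 1 := by
  simp [eval_monomial, Finsupp.prod_pow, Fin.prod_univ_two, mul_assoc]

theorem pderiv_zero_pderiv_one_monomial (d : Fin 2 →₀ ℕ) (r : ℝ) :
    pderiv 0 (pderiv 1 (monomial d r)) =
      monomial (d - Finsupp.single 1 1 - Finsupp.single 0 1) (r * d 1 * d 0) := by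
  simp [pderiv_monomial, Finsupp.tsub_apply]

end MvPolynomial

noncomputable def traceMoment (a y : ℝ) : MvPolynomial (Fin 2) ℝ →+ ℝ :=
  AddMonoidHom.mk' (fun v => ∫ x in (0:ℝ)..a, (x - a / 2) * eval ![x, y] v) fun v w => by
    simp only [map_add, mul_add]
    exact integral_add
      ((intervalIntegrable_eval_vecCons_two v y 0 a).continuousOn_mul (by fun_prop))
      ((intervalIntegrable_eval_vecCons_two w y 0 a).continuousOn_mul (by fun_prop))

noncomputable def rectIntegral (a b : ℝ) : MvPolynomial (Fin 2) ℝ →+ ℝ :=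
  AddMonoidHom.mk' (fun w => ∫ x in (0:ℝ)..a, ∫ y in (0:ℝ)..b, eval ![x, y] w) fun v w => by
    have hy (u : MvPolynomial (Fin 2) ℝ) (x : ℝ) :
        IntervalIntegrable (fun y => eval ![x, y] u) MeasureTheory.volume 0 b :=
      ((continuous_eval_vecCons_two u).comp
        (continuous_const.prodMk continuous_id)).intervalIntegrable 0 b
    have hx (u : MvPolynomial (Fin 2) ℝ) :
        IntervalIntegrable (fun x => ∫ y in (0:ℝ)..b, eval ![x, y] u)
          MeasureTheory.volume 0 a :=
      (continuous_parametric_intervalIntegral_of_continuous'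
        (continuous_eval_vecCons_two u) 0 b).intervalIntegrable 0 a
    simp only [map_add, integral_add (hy v _) (hy w _)]
    exact integral_add (hx v) (hx w)

theorem traceMoment_apply (a y : ℝ) (v : MvPolynomial (Fin 2) ℝ) :
    traceMoment a y v = ∫ x in (0:ℝ)..a, (x - a / 2) * eval ![x, y] v := rfl

theorem rectIntegral_apply (a b : ℝ) (w : MvPolynomial (Fin 2) ℝ) :
    rectIntegral a b w = ∫ x in (0:ℝ)..a, ∫ y in (0:ℝ)..b, eval ![x, y] w := rfl

theorem integral_sub_half_mul_self (a : ℝ) :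
    ∫ x in (0:ℝ)..a, (x - a / 2) * x = a ^ 3 / 12 := by
  simp only [sub_mul, ← sq]
  rw [integral_sub (by apply Continuous.intervalIntegrable; fun_prop)
      (intervalIntegrable_id.const_mul _), integral_pow, integral_const_mul, integral_id]
  ring

theorem traceMoment_sub_eq_rectIntegral_monomial (a b : ℝ) {d : Fin 2 →₀ ℕ} (r : ℝ)
    (hd : d 0 = 0 ∨ d 1 = 0 ∨ (d 0 = 1 ∧ d 1 = 1)) :
    traceMoment a b (monomial d r) - traceMoment a 0 (monomial d r) =
      a ^ 2 / 12 * rectIntegral a b (pderiv 0 (pderiv 1 (monomial d r))) := by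
  rcases hd with h0 | h1 | ⟨h0, h1⟩
  · have hderiv : pderiv 0 (pderiv 1 (monomial d r)) = 0 := by
      simp [h0]
    have hT (y : ℝ) : traceMoment a y (monomial d r) = 0 := by
      simp [traceMoment_apply, eval_vecCons_two_monomial, h0, integral_mul_const, sq]
    rw [hT, hT, hderiv, map_zero, mul_zero, sub_zero]
  · have hderiv : pderiv 0 (pderiv 1 (monomial d r)) = 0 := by
      simp [h1]
    have hT : traceMoment a b (monomial d r) = traceMoment a 0 (monomial d r) := by
      simp [traceMoment_apply, eval_vecCons_two_monomial, h1]
    rw [hT, hderiv, map_zero, mul_zero, sub_self]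
  · have hderiv : pderiv 0 (pderiv 1 (monomial d r)) = C r := by
      have hd : d - Finsupp.single 1 1 - Finsupp.single 0 1 = 0 := by
        ext i
        fin_cases i <;> simp [h0, h1]
      rw [pderiv_zero_pderiv_one_monomial, hd, h0, h1, monomial_zero']
      simp
    have htop : traceMoment a b (monomial d r) = r * b * (a ^ 3 / 12) := by
      rw [traceMoment_apply, ← integral_sub_half_mul_self, ← integral_const_mul]
      congr 1 with x
      rw [eval_vecCons_two_monomial, h0, h1]
      ring
    have hbot : traceMoment a 0 (monomial d r) = 0 := by
      simp [traceMoment_apply, eval_vecCons_two_monomial, h1]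
    rw [htop, hbot, hderiv, rectIntegral_apply]
    simp only [eval_C, integral_const, smul_eq_mul, sub_zero]
    ring

theorem memP2y3.support_cases {v : MvPolynomial (Fin 2) ℝ} (hv : memP2y3 v) :
    ∀ d ∈ v.support, d 0 = 0 ∨ d 1 = 0 ∨ (d 0 = 1 ∧ d 1 = 1) := by
  obtain ⟨p, c, hp, rfl⟩ := hv
  intro d hd
  rcases Finset.mem_union.1 (support_add hd) with hd | hd
  · have := (le_totalDegree hd).trans hp
    rw [Finsupp.sum_fintype _ _ fun _ => rfl, Fin.sum_univ_two] at this
    omega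
  · rw [X_pow_eq_monomial, C_mul_monomial, mul_one] at hd
    obtain rfl := Finset.mem_singleton.1 (support_monomial_subset hd)
    simp

theorem traceMoment_sub_eq_rectIntegral (a b : ℝ) {v : MvPolynomial (Fin 2) ℝ}
    (hv : ∀ d ∈ v.support, d 0 = 0 ∨ d 1 = 0 ∨ (d 0 = 1 ∧ d 1 = 1)) :
    traceMoment a b v - traceMoment a 0 v =
      a ^ 2 / 12 * rectIntegral a b (pderiv 0 (pderiv 1 v)) := by
  rw [v.as_sum]
  simp only [map_sum, ← Finset.sum_sub_distrib, Finset.mul_sum]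
  exact Finset.sum_congr rfl fun d hd =>
    traceMoment_sub_eq_rectIntegral_monomial a b _ (hv d hd)

theorem stmt13_general (a b : ℝ)
    (v : MvPolynomial (Fin 2) ℝ) (hv : memP2y3 v)
    (α β γ : ℝ)
    (mb mt : ℝ)
    (hmb : mb = (1 / a) * ∫ x in (0:ℝ)..a, eval ![x, 0] v)
    (hmt : mt = (1 / a) * ∫ x in (0:ℝ)..a, eval ![x, b] v) :
    (∫ x in (0:ℝ)..a, (α + β * x + γ * b) * (eval ![x, b] v - mt)) -
      (∫ x in (0:ℝ)..a, (α + β * x + γ * 0) * (eval ![x, 0] v - mb)) =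
    (a ^ 2 * β / 12) *
      ∫ x in (0:ℝ)..a, ∫ y in (0:ℝ)..b, eval ![x, y] (pderiv 0 (pderiv 1 v)) := by
  have average (y : ℝ) :
      ∫ x in (0:ℝ)..a, (α + β * x + γ * y) *
        (eval ![x, y] v - (1 / a) * ∫ x in (0:ℝ)..a, eval ![x, y] v) =
        β * traceMoment a y v := by
    simpa [add_right_comm α, traceMoment_apply] using integral_affine_mul_sub_average 0 a
      (α + γ * y) β (intervalIntegrable_eval_vecCons_two v y 0 a)
  rw [hmb, hmt, average, average, ← mul_sub,
    traceMoment_sub_eq_rectIntegral a b hv.support_cases, rectIntegral_apply]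
  ring

/-- the identity `J₁,K(u₁,v) = J′₁,K(u₁,v)` for all `u₁` with
`∂u₁/∂y = g = α + βx + γy ∈ P₁`, for `v ∈ P₂ ⊕ span{y³}` on `K = [0,a] × [0,b]`. -/
theorem stmt13 (a b : ℝ) (ha : 0 < a) (hb : 0 < b)
    (v : MvPolynomial (Fin 2) ℝ) (hv : memP2y3 v)
    (α β γ : ℝ)
    (mb mt : ℝ)
    (hmb : mb = (1 / a) * ∫ x in (0:ℝ)..a, eval ![x, 0] v)
    (hmt : mt = (1 / a) * ∫ x in (0:ℝ)..a, eval ![x, b] v) :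
    (∫ x in (0:ℝ)..a, (α + β * x + γ * b) * (eval ![x, b] v - mt)) -
      (∫ x in (0:ℝ)..a, (α + β * x + γ * 0) * (eval ![x, 0] v - mb)) =
    (a ^ 2 * β / 12) *
      ∫ x in (0:ℝ)..a, ∫ y in (0:ℝ)..b, eval ![x, y] (pderiv 0 (pderiv 1 v)) :=
  stmt13_general a b v hv α β γ mb mt hmb hmt
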